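/- Let A be a signed graph on n vertices and let 1 ≤ k ≤ n−1. Then the exterior k-th power ∧^k A is itself a signed graph: it is a symmetric matrix with zero diagonal all of whose entries lie in {−1, 0, 1}. -/

import Mathlib

open Matrix Finset

def IsSignedMatrix {ι : Type*} (B : Matrix ι ι ℝ) : Prop :=
  B.IsSymm ∧ (∀ i, B i i = 0) ∧ ∀ i j, B i j = -1 ∨ B i j = 0 ∨ B i j = 1

def IsBalancedMatrix {ι : Type*} [Fintype ι] (B : Matrix ι ι ℝ) : Prop :=
  ∃ D : Matrix ι ι ℝ, D.IsDiag ∧ (∀ i, D i i = 1 ∨ D i i = -1) ∧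
    D * B * D = Matrix.of fun i j => |B i j|

def cartPow {n : ℕ} (A : Matrix (Fin n) (Fin n) ℝ) (k : ℕ) :
    Matrix (Fin k → Fin n) (Fin k → Fin n) ℝ :=
  Matrix.of fun u v => ∑ i : Fin k, A (u i) (v i) *
    ∏ j ∈ Finset.univ.erase i, (if u j = v j then (1 : ℝ) else 0)

noncomputable def enumOf {n k : ℕ} (r : LinearOrder (Fin n)) (S : Finset (Fin n))
    (h : S.card = k) : Fin k → Fin n :=
  fun i => ((@Finset.orderIsoOfFin (Fin n) r S k h) i : Fin n)

noncomputable def altOf {n : ℕ} (k : ℕ) (r : LinearOrder (Fin n)) :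
    Matrix (Fin k → Fin n) {S : Finset (Fin n) // S.card = k} ℝ :=
  Matrix.of fun u S =>
    (Real.sqrt (Nat.factorial k))⁻¹ *
      ∑ π : Equiv.Perm (Fin k),
        if u = enumOf r S.1 S.2 ∘ π then ((Equiv.Perm.sign π : ℤ) : ℝ) else 0

noncomputable def alt (n k : ℕ) :
    Matrix (Fin k → Fin n) {S : Finset (Fin n) // S.card = k} ℝ :=
  altOf k inferInstance

noncomputable def extPow {n : ℕ} (A : Matrix (Fin n) (Fin n) ℝ) (k : ℕ) :
    Matrix {S : Finset (Fin n) // S.card = k} {S : Finset (Fin n) // S.card = k} ℝ :=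
  (alt n k)ᵀ * cartPow A k * alt n k

def IsPathMatrix {n : ℕ} (A : Matrix (Fin n) (Fin n) ℝ) : Prop :=
  ∃ g : Equiv.Perm (Fin n), ∀ i j : Fin n,
    |A (g i) (g j)| = 1 ↔ ((i : ℤ) - j = 1 ∨ (j : ℤ) - i = 1)

def IsCycleMatrix {n : ℕ} (A : Matrix (Fin n) (Fin n) ℝ) : Prop :=
  3 ≤ n ∧ ∃ g : Equiv.Perm (Fin n), ∀ i j : Fin n,
    |A (g i) (g j)| = 1 ↔
      ((i : ℤ) - j ≡ 1 [ZMOD (n : ℤ)] ∨ (i : ℤ) - j ≡ -1 [ZMOD (n : ℤ)])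

def signedAdjGraph {n : ℕ} (A : Matrix (Fin n) (Fin n) ℝ) : SimpleGraph (Fin n) :=
  SimpleGraph.fromRel (fun u v => |A u v| = 1)

section Stmt5Aux

variable {n k : ℕ}

noncomputable def ev (S : {S : Finset (Fin n) // S.card = k}) : Fin k → Fin n :=
  enumOf inferInstance S.1 S.2

lemma ev_injective (S : {S : Finset (Fin n) // S.card = k}) :
    Function.Injective (ev S) := by
  intro a b h
  exact (S.1.orderIsoOfFin S.2).injective (Subtype.ext h)

lemma sum_alt_mul (S : {S : Finset (Fin n) // S.card = k}) (x : (Fin k → Fin n) → ℝ) :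
    ∑ u, alt n k u S * x u
      = (Real.sqrt (Nat.factorial k))⁻¹ *
        ∑ π : Equiv.Perm (Fin k), ((Equiv.Perm.sign π : ℤ) : ℝ) * x (ev S ∘ π) := by
  simp only [alt, altOf, Matrix.of_apply]
  simp_rw [mul_assoc]
  rw [← Finset.mul_sum]
  congr 1
  simp_rw [Finset.sum_mul]
  rw [Finset.sum_comm]
  refine Finset.sum_congr rfl fun π _ => ?_
  simp_rw [ite_mul, zero_mul]
  rw [Finset.sum_ite_eq' Finset.univ (enumOf (inferInstance : LinearOrder (Fin n)) S.1 S.2 ∘ π)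
    (fun u => ((Equiv.Perm.sign π : ℤ) : ℝ) * x u)]
  simp [ev]

lemma cartPow_comp (A : Matrix (Fin n) (Fin n) ℝ) (u v : Fin k → Fin n) (π : Equiv.Perm (Fin k)) :
    cartPow A k (u ∘ π) (v ∘ π) = cartPow A k u v := by
  simp only [cartPow, Matrix.of_apply, Function.comp_apply]
  refine Fintype.sum_equiv π _ _ fun i => ?_
  congr 1
  rw [← Finset.prod_image (f := fun j => if u j = v j then (1:ℝ) else 0) (g := ⇑π)
    (s := Finset.univ.erase i) (fun a _ b _ h => π.injective h)]
  congr 1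
  rw [Finset.image_erase π.injective]
  congr 1
  simp

lemma cartPow_symm (A : Matrix (Fin n) (Fin n) ℝ) (hA : A.IsSymm) (u v : Fin k → Fin n) :
    cartPow A k u v = cartPow A k v u := by
  simp only [cartPow, Matrix.of_apply]
  refine Finset.sum_congr rfl fun i _ => ?_
  congr 1
  · exact (hA.apply _ _).symm
  · refine Finset.prod_congr rfl fun j _ => ?_
    simp [eq_comm]

lemma extPow_eq (A : Matrix (Fin n) (Fin n) ℝ) (S T : {S : Finset (Fin n) // S.card = k}) :
    extPow A k S T
      = ∑ ρ : Equiv.Perm (Fin k), ((Equiv.Perm.sign ρ : ℤ) : ℝ) *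
          cartPow A k (ev S) (ev T ∘ ρ) := by
  set c : ℝ := (Real.sqrt (Nat.factorial k))⁻¹ with hc
  have hcc : c * (c * (Nat.factorial k : ℝ)) = 1 := by
    rw [hc, ← mul_assoc, ← mul_inv,
      Real.mul_self_sqrt (by positivity : (0:ℝ) ≤ (Nat.factorial k : ℝ))]
    rw [inv_mul_cancel₀ (by exact_mod_cast Nat.factorial_ne_zero k)]
  have h1 : extPow A k S T = ∑ u, alt n k u S * ∑ v, alt n k v T * cartPow A k u v := by
    simp only [extPow, Matrix.mul_apply, Matrix.transpose_apply]
    simp_rw [Finset.sum_mul]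
    rw [Finset.sum_comm]
    refine Finset.sum_congr rfl fun u _ => ?_
    rw [Finset.mul_sum]
    exact Finset.sum_congr rfl fun v _ => by ring
  rw [h1]
  calc ∑ u, alt n k u S * ∑ v, alt n k v T * cartPow A k u v
      = ∑ u, alt n k u S *
          (c * ∑ σ : Equiv.Perm (Fin k), ((Equiv.Perm.sign σ : ℤ) : ℝ) *
            cartPow A k u (ev T ∘ σ)) := by
        refine Finset.sum_congr rfl fun u _ => ?_
        rw [sum_alt_mul T (fun v => cartPow A k u v)]
    _ = c * ∑ π : Equiv.Perm (Fin k), ((Equiv.Perm.sign π : ℤ) : ℝ) *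
          (c * ∑ σ : Equiv.Perm (Fin k), ((Equiv.Perm.sign σ : ℤ) : ℝ) *
            cartPow A k (ev S ∘ π) (ev T ∘ σ)) := by
        exact sum_alt_mul S _
    _ = c * ∑ _π : Equiv.Perm (Fin k),
          (c * ∑ ρ : Equiv.Perm (Fin k), ((Equiv.Perm.sign ρ : ℤ) : ℝ) *
            cartPow A k (ev S) (ev T ∘ ρ)) := by
        refine congrArg _ (Finset.sum_congr rfl fun π _ => ?_)
        have hsσ : ∀ ρ : Equiv.Perm (Fin k),
            ((Equiv.Perm.sign ρ : ℤ) : ℝ) * ((Equiv.Perm.sign π : ℤ) : ℝ) *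
              cartPow A k (ev S) (ev T ∘ ρ)
            = ((Equiv.Perm.sign (ρ * π) : ℤ) : ℝ) *
              cartPow A k (ev S ∘ ⇑π) (ev T ∘ ⇑(ρ * π)) := by
          intro ρ
          have hcomp : (ev T ∘ ⇑(ρ * π)) = (ev T ∘ ⇑ρ) ∘ ⇑π := by
            funext j; simp [Function.comp, Equiv.Perm.mul_apply]
          rw [hcomp, cartPow_comp A (ev S) (ev T ∘ ⇑ρ) π]
          congr 1
          rw [Equiv.Perm.sign_mul]
          push_cast
          ring
        have hswap : ∑ σ : Equiv.Perm (Fin k), ((Equiv.Perm.sign σ : ℤ) : ℝ) *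
              cartPow A k (ev S ∘ π) (ev T ∘ σ)
            = ∑ ρ : Equiv.Perm (Fin k),
              ((Equiv.Perm.sign ρ : ℤ) : ℝ) * ((Equiv.Perm.sign π : ℤ) : ℝ) *
                cartPow A k (ev S) (ev T ∘ ρ) := by
          refine (Fintype.sum_equiv (Equiv.mulRight π) _ _ fun ρ => ?_).symm
          rw [hsσ ρ]
          simp only [Equiv.coe_mulRight]
        rw [hswap]
        have hs1 : ((Equiv.Perm.sign π : ℤ) : ℝ) * ((Equiv.Perm.sign π : ℤ) : ℝ) = 1 := by
          rcases Int.units_eq_one_or (Equiv.Perm.sign π) with h | h <;> rw [h] <;> norm_num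
        rw [Finset.mul_sum, Finset.mul_sum, Finset.mul_sum]
        refine Finset.sum_congr rfl fun ρ _ => ?_
        calc ((Equiv.Perm.sign π : ℤ) : ℝ) *
              (c * (((Equiv.Perm.sign ρ : ℤ) : ℝ) * ((Equiv.Perm.sign π : ℤ) : ℝ) *
                cartPow A k (ev S) (ev T ∘ ρ)))
            = (((Equiv.Perm.sign π : ℤ) : ℝ) * ((Equiv.Perm.sign π : ℤ) : ℝ)) *
              (c * (((Equiv.Perm.sign ρ : ℤ) : ℝ) * cartPow A k (ev S) (ev T ∘ ρ))) := by ring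
          _ = c * (((Equiv.Perm.sign ρ : ℤ) : ℝ) * cartPow A k (ev S) (ev T ∘ ρ)) := by
              rw [hs1, one_mul]
    _ = ∑ ρ : Equiv.Perm (Fin k), ((Equiv.Perm.sign ρ : ℤ) : ℝ) *
          cartPow A k (ev S) (ev T ∘ ρ) := by
        rw [Finset.sum_const, nsmul_eq_mul]
        simp only [Finset.card_univ, Fintype.card_perm, Fintype.card_fin]
        calc c * ((Nat.factorial k : ℝ) * (c * ∑ ρ : Equiv.Perm (Fin k),
              ((Equiv.Perm.sign ρ : ℤ) : ℝ) * cartPow A k (ev S) (ev T ∘ ρ)))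
            = (c * (c * (Nat.factorial k : ℝ))) * ∑ ρ : Equiv.Perm (Fin k),
              ((Equiv.Perm.sign ρ : ℤ) : ℝ) * cartPow A k (ev S) (ev T ∘ ρ) := by ring
          _ = _ := by rw [hcc, one_mul]

noncomputable def termF (A : Matrix (Fin n) (Fin n) ℝ)
    (S T : {S : Finset (Fin n) // S.card = k}) (p : Equiv.Perm (Fin k) × Fin k) : ℝ :=
  ((Equiv.Perm.sign p.1 : ℤ) : ℝ) *
    (A (ev S p.2) (ev T (p.1 p.2)) *
      ∏ j ∈ Finset.univ.erase p.2, (if ev S j = ev T (p.1 j) then (1:ℝ) else 0))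

lemma extPow_eq' (A : Matrix (Fin n) (Fin n) ℝ) (S T : {S : Finset (Fin n) // S.card = k}) :
    extPow A k S T = ∑ p : Equiv.Perm (Fin k) × Fin k, termF A S T p := by
  rw [extPow_eq, Fintype.sum_prod_type]
  refine Finset.sum_congr rfl fun ρ _ => ?_
  simp only [cartPow, Matrix.of_apply]
  rw [Finset.mul_sum]
  rfl

lemma good_of_ne {A : Matrix (Fin n) (Fin n) ℝ} (hA : IsSignedMatrix A)
    {S T : {S : Finset (Fin n) // S.card = k}} {p : Equiv.Perm (Fin k) × Fin k}
    (h : termF A S T p ≠ 0) :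
    (∀ j, j ≠ p.2 → ev S j = ev T (p.1 j)) ∧ ev S p.2 ≠ ev T (p.1 p.2) := by
  obtain ⟨hsym, hdiag, hval⟩ := hA
  have h1 : A (ev S p.2) (ev T (p.1 p.2)) *
      ∏ j ∈ Finset.univ.erase p.2, (if ev S j = ev T (p.1 j) then (1:ℝ) else 0) ≠ 0 :=
    right_ne_zero_of_mul h
  have ha := left_ne_zero_of_mul h1
  have hprod := right_ne_zero_of_mul h1
  constructor
  · intro j hj
    have hf := Finset.prod_ne_zero_iff.mp hprod j (by simp [hj])
    by_contra hc
    simp [hc] at hf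
  · intro hc
    rw [hc] at ha
    exact ha (hdiag _)

lemma term_unique {A : Matrix (Fin n) (Fin n) ℝ} (hA : IsSignedMatrix A)
    {S T : {S : Finset (Fin n) // S.card = k}} {p q : Equiv.Perm (Fin k) × Fin k}
    (hp : termF A S T p ≠ 0) (hq : termF A S T q ≠ 0) : p = q := by
  obtain ⟨g1, d1⟩ := good_of_ne hA hp
  obtain ⟨g2, d2⟩ := good_of_ne hA hq
  obtain ⟨ρ₁, i₁⟩ := p
  obtain ⟨ρ₂, i₂⟩ := q
  simp only at g1 d1 g2 d2
  have hT := ev_injective T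
  have hS := ev_injective S
  by_cases hi : i₁ = i₂
  · subst hi
    have hfix : ∀ j, j ≠ i₁ → ρ₁ j = ρ₂ j := fun j hj => hT ((g1 j hj).symm.trans (g2 j hj))
    have htop : ρ₁ i₁ = ρ₂ i₁ := by
      by_contra hc
      have hm1 : ρ₁ (ρ₁⁻¹ (ρ₂ i₁)) = ρ₂ i₁ := ρ₁.apply_symm_apply _
      have hmne : ρ₁⁻¹ (ρ₂ i₁) ≠ i₁ := by
        intro h; rw [h] at hm1; exact hc hm1
      have : ρ₂ (ρ₁⁻¹ (ρ₂ i₁)) = ρ₂ i₁ := (hfix _ hmne).symm.trans hm1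
      exact hmne (ρ₂.injective this)
    have : ρ₁ = ρ₂ := by
      refine Equiv.ext fun j => ?_
      by_cases h : j = i₁
      · rw [h]; exact htop
      · exact hfix j h
    rw [this]
  · exfalso
    have key : ρ₁ i₂ = ρ₂ i₁ := by
      have hm1 : ρ₁ (ρ₁⁻¹ (ρ₂ i₁)) = ρ₂ i₁ := ρ₁.apply_symm_apply _
      have hmne1 : ρ₁⁻¹ (ρ₂ i₁) ≠ i₁ := by
        intro h
        rw [h] at hm1
        exact d1 (by rw [hm1, ← g2 i₁ hi])
      have hm2 : ρ₁⁻¹ (ρ₂ i₁) = i₂ := by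
        by_contra hmne2
        have h1 : ρ₁ (ρ₁⁻¹ (ρ₂ i₁)) = ρ₂ (ρ₁⁻¹ (ρ₂ i₁)) :=
          hT ((g1 _ hmne1).symm.trans (g2 _ hmne2))
        have : ρ₂ (ρ₁⁻¹ (ρ₂ i₁)) = ρ₂ i₁ := h1.symm.trans hm1
        exact hmne1 (ρ₂.injective this)
      rw [← hm2, hm1]
    have : ev S i₁ = ev S i₂ := by
      rw [g2 i₁ hi, ← key, ← g1 i₂ (Ne.symm hi)]
    exact hi (hS this)

lemma extPow_diag {A : Matrix (Fin n) (Fin n) ℝ} (hA : IsSignedMatrix A)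
    (S : {S : Finset (Fin n) // S.card = k}) : extPow A k S S = 0 := by
  rw [extPow_eq']
  refine Finset.sum_eq_zero fun p _ => ?_
  by_contra hp
  obtain ⟨g, d⟩ := good_of_ne hA hp
  have hfix : ∀ j, j ≠ p.2 → p.1 j = j := fun j hj => (ev_injective S (g j hj)).symm
  have htop : p.1 p.2 = p.2 := by
    by_contra hc
    have := hfix (p.1 p.2) hc
    exact hc (p.1.injective this)
  exact d (by rw [htop])

lemma extPow_entry {A : Matrix (Fin n) (Fin n) ℝ} (hA : IsSignedMatrix A)
    (S T : {S : Finset (Fin n) // S.card = k}) :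
    extPow A k S T = -1 ∨ extPow A k S T = 0 ∨ extPow A k S T = 1 := by
  rw [extPow_eq']
  by_cases h : ∀ p : Equiv.Perm (Fin k) × Fin k, termF A S T p = 0
  · right; left; exact Finset.sum_eq_zero fun p _ => h p
  · push_neg at h
    obtain ⟨p₀, hp₀⟩ := h
    have hsum : ∑ p : Equiv.Perm (Fin k) × Fin k, termF A S T p = termF A S T p₀ := by
      refine Finset.sum_eq_single_of_mem p₀ (Finset.mem_univ _) fun q _ hq => ?_
      by_contra hq0
      exact hq (term_unique hA hq0 hp₀)
    rw [hsum]
    obtain ⟨hsym, hdiag, hval⟩ := hA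
    have h1 : A (ev S p₀.2) (ev T (p₀.1 p₀.2)) *
        ∏ j ∈ Finset.univ.erase p₀.2, (if ev S j = ev T (p₀.1 j) then (1:ℝ) else 0) ≠ 0 :=
      right_ne_zero_of_mul hp₀
    have ha := left_ne_zero_of_mul h1
    have hprod := right_ne_zero_of_mul h1
    have hprod1 : ∏ j ∈ Finset.univ.erase p₀.2,
        (if ev S j = ev T (p₀.1 j) then (1:ℝ) else 0) = 1 := by
      refine Finset.prod_eq_one fun j hj => ?_
      have hf := Finset.prod_ne_zero_iff.mp hprod j hj
      by_cases hc : ev S j = ev T (p₀.1 j)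
      · simp [hc]
      · simp [hc] at hf
    have haval : A (ev S p₀.2) (ev T (p₀.1 p₀.2)) = -1 ∨
        A (ev S p₀.2) (ev T (p₀.1 p₀.2)) = 1 := by
      rcases hval (ev S p₀.2) (ev T (p₀.1 p₀.2)) with h | h | h
      · exact Or.inl h
      · exact absurd h ha
      · exact Or.inr h
    unfold termF
    rw [hprod1, mul_one]
    rcases Int.units_eq_one_or (Equiv.Perm.sign p₀.1) with hs | hs <;>
      rcases haval with hv | hv <;> rw [hs, hv] <;> norm_num

lemma extPow_comm {A : Matrix (Fin n) (Fin n) ℝ} (hsym : A.IsSymm)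
    (S T : {S : Finset (Fin n) // S.card = k}) : extPow A k S T = extPow A k T S := by
  rw [extPow_eq, extPow_eq]
  refine Fintype.sum_equiv (Equiv.inv (Equiv.Perm (Fin k))) _ _ fun ρ => ?_
  have h1 : cartPow A k (ev T) (ev S ∘ ⇑ρ⁻¹) = cartPow A k (ev S) (ev T ∘ ⇑ρ) := by
    rw [← cartPow_comp A (ev T) (ev S ∘ ⇑ρ⁻¹) ρ]
    have h2 : (ev S ∘ ⇑ρ⁻¹) ∘ ⇑ρ = ev S := by
      funext j; simp
    rw [h2]
    have h3 : ev T ∘ ⇑ρ = (ev T ∘ ⇑ρ) ∘ id := rfl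
    exact cartPow_symm A hsym _ _
  simp only [Equiv.inv_apply]
  rw [h1, Equiv.Perm.sign_inv]

end Stmt5Aux

theorem stmt5 {n k : ℕ} (hk : 1 ≤ k) (hkn : k ≤ n - 1)
    (A : Matrix (Fin n) (Fin n) ℝ) (hA : IsSignedMatrix A) :
    IsSignedMatrix (extPow A k) := by
  refine ⟨Matrix.IsSymm.ext fun S T => extPow_comm hA.1 T S, fun S => extPow_diag hA S,
    fun S T => extPow_entry hA S T⟩
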